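/- The positive part of the generating function of the D_k operators satisfies D_+(z) = Σ_{k≥1} z^k D_k = z · P_{−z/M} ∘ D_1 ∘ P_{z/M}, as an identity of formal power series in z with coefficients that are linear operators on the ring of symmetric functions. -/

import Mathlib

/-!
Common setup for "A proof of the Theta Operator Conjecture" (Romero).

* `K = ℚ(q,t)` is realized as the fraction field of `ℚ[q,t]`.
* `Λ`, the ring of symmetric functions with coefficients in `ℚ(q,t)`, is realized as the
  polynomial ring on the power sums `p 1, p 2, …` (a presentation valid in characteristic 0).
* The plethystic exponential `E[X] = ∑ hₙ[X] = exp (∑ p_k/k)` is encoded through the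
  Newton-type recursion `n·Gₙ = ∑_{k=1}^{n} c_k G_{n-k}` for the coefficients of
  `exp (∑_{k ≥ 1} c_k z^k / k)`.
* Formal series in an auxiliary variable `z` (resp. a Laurent variable) with coefficients
  in `Λ` are elements of `PowerSeries Λ` (resp. `LaurentSeries Λ`), and operator identities
  involving generating functions are stated coefficientwise / as series identities,
  pointwise on `F : Λ`.
* The modified Macdonald basis `H̃_μ` (indexed by `YoungDiagram`) is axiomatized in the
  structure `MacdonaldBasis` via the Garsia–Haiman triangularity/normalization
  characterization; all Macdonald eigenoperators (`Δ_f`, `∇`, `Π`, `Θ_k`, `Δ_v`) are then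
  defined diagonally from it.
-/

noncomputable section

namespace ThetaOperators

open scoped Classical

/-- The base field `ℚ(q,t)`. -/
abbrev K : Type := FractionRing (MvPolynomial (Fin 2) ℚ)

/-- The parameter `q`. -/
def q : K := algebraMap (MvPolynomial (Fin 2) ℚ) K (MvPolynomial.X 0)

/-- The parameter `t`. -/
def t : K := algebraMap (MvPolynomial (Fin 2) ℚ) K (MvPolynomial.X 1)

/-- `M = (1-q)(1-t)`. -/
def M : K := (1 - q) * (1 - t)

/-- The ring of symmetric functions with coefficients in `ℚ(q,t)`, presented as the
polynomial ring on the power sums. -/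
abbrev Λ : Type := MvPolynomial ℕ+ K

/-- The power sum symmetric function `p_k`. -/
def p (k : ℕ+) : Λ := MvPolynomial.X k

/-- `genF c n` is the coefficient of `z^n` in `exp (∑_{k ≥ 1} c_k z^k / k)`,
via the Newton-type recursion `n·Gₙ = ∑_{k=1}^{n} c_k G_{n-k}`. -/
def genF (c : ℕ+ → Λ) : ℕ → Λ
  | 0 => 1
  | n + 1 =>
      (((n : K) + 1)⁻¹) •
        ∑ k ∈ Finset.range (n + 1), c ⟨k + 1, Nat.succ_pos k⟩ * genF c (n - k)
  termination_by n => n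
  decreasing_by simp_wf <;> omega

/-- The complete homogeneous symmetric function `h_n`: coefficient of `z^n`
in `E[zX] = exp (∑ p_k z^k / k)`. -/
def h (n : ℕ) : Λ := genF p n

/-- The elementary symmetric function `e_n`: `E[-zX] = ∑ (-z)^n e_n`. -/
def e (n : ℕ) : Λ := (-1) ^ n * genF (fun k => -p k) n

/-- Scalar version of `genF`: coefficient of `z^n` in `exp (∑_{k≥1} c_k z^k / k)` over `K`. -/
def genK (c : ℕ+ → K) : ℕ → K
  | 0 => 1
  | n + 1 =>
      ((n : K) + 1)⁻¹ *
        ∑ k ∈ Finset.range (n + 1), c ⟨k + 1, Nat.succ_pos k⟩ * genK c (n - k)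
  termination_by n => n
  decreasing_by simp_wf <;> omega

/-- `Eser ζ n` is the coefficient of `z^n` in `E[zWX]`, where `W` is the alphabet with
power sums `p_k[W] = ζ k`.  E.g. `Eser (fun _ => -1) n = (-1)^n eₙ[X]`, so that
`∑ z^n · Eser (fun _ => -1) n = E[-zX]`. -/
def Eser (ζ : ℕ+ → K) (n : ℕ) : Λ := genF (fun k => MvPolynomial.C (ζ k) * p k) n

/-- `p_k[M] = (1-q^k)(1-t^k)`. -/
def Mk (k : ℕ+) : K := (1 - q ^ (k : ℕ)) * (1 - t ^ (k : ℕ))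

/-- `p_k[X/M]`-twist: `1/((1-q^k)(1-t^k))`.  Thus `Eser invM n = h_n[X/M]` and
`∑ z^n Eser invM n = E[zX/M]`; similarly `∑ z^n Eser (fun j => -invM j) n = E[-zX/M]`. -/
def invM (k : ℕ+) : K := (Mk k)⁻¹

/-- Plethystic translation `T_Y : F[X] ↦ F[X+Y]` by an alphabet `Y` with power sums
`p_k[Y] = a k ∈ K`. -/
def Ttr (a : ℕ+ → K) : Λ →ₐ[K] Λ :=
  MvPolynomial.aeval fun k => p k + MvPolynomial.C (a k)

/-- `f ↦ f* = f[X/M]`. -/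
def star : Λ →ₐ[K] Λ :=
  MvPolynomial.aeval fun k => MvPolynomial.C (invM k) * p k

/-- `F ↦ F[X + M/z]`, as a Laurent series in `z` with coefficients in `Λ`
(the translation `T_{M/z}`). -/
def TMz : Λ →ₐ[K] LaurentSeries Λ :=
  MvPolynomial.aeval fun k =>
    HahnSeries.C (p k) + Mk k • HahnSeries.single (-((k : ℕ) : ℤ)) (1 : Λ)

/-- `E[-zX]` as a Laurent series in `z`. -/
def EnegL : LaurentSeries Λ :=
  HahnSeries.ofPowerSeries ℤ Λ (PowerSeries.mk (Eser fun _ => -1))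

/-- The Garsia–Haiman–Tesler operator `D_k`:
`D_k F = (F[X + M/z] · E[-zX]) |_{z^k}`. -/
def D (k : ℤ) (F : Λ) : Λ := ((TMz F) * EnegL).coeff k

/-- `p_k[B_μ] = ∑_{(i,j) ∈ μ} q^{k i'} t^{k j'}` where the cell `c` of the Young diagram
has (0-based) column index `c.2` (the `q`-exponent) and row index `c.1` (the `t`-exponent). -/
def Bexp (μ : YoungDiagram) (k : ℕ+) : K :=
  ∑ c ∈ μ.cells, q ^ ((k : ℕ) * c.2) * t ^ ((k : ℕ) * c.1)

/-- `n(μ) = ∑ᵢ (i-1) μᵢ`: the sum of the (0-based) row indices of the cells. -/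
def nstat (μ : YoungDiagram) : ℕ := ∑ c ∈ μ.cells, c.1

/-- `n(μ') = ∑ᵢ (i-1) μᵢ'`: the sum of the (0-based) column indices of the cells. -/
def nstat' (μ : YoungDiagram) : ℕ := ∑ c ∈ μ.cells, c.2

/-- `h_n` for integer index (zero for negative `n`). -/
def hZ (n : ℤ) : Λ := if n < 0 then 0 else h n.toNat

/-- The Schur function, via the Jacobi–Trudi determinant. -/
def schur (μ : YoungDiagram) : Λ :=
  Matrix.det (Matrix.of fun i j : Fin (μ.colLen 0) =>
    hZ ((μ.rowLen i : ℤ) + (j : ℤ) - (i : ℤ)))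

/-- Dominance order: `lam ⊵ μ`. -/
def Dominates (lam μ : YoungDiagram) : Prop :=
  lam.card = μ.card ∧
    ∀ m : ℕ, ∑ i ∈ Finset.range m, μ.rowLen i ≤ ∑ i ∈ Finset.range m, lam.rowLen i

/-- The span of the Schur functions `s_lam` with `lam ⊵ μ`. -/
def domSpan (μ : YoungDiagram) : Submodule K Λ :=
  Submodule.span K {f | ∃ lam, Dominates lam μ ∧ f = schur lam}

/-- Plethystic twist `F[X] ↦ F[AX]` for an alphabet `A` with `p_k[A] = a k`. -/
def twist (a : ℕ+ → K) : Λ →ₐ[K] Λ :=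
  MvPolynomial.aeval fun k => MvPolynomial.C (a k) * p k

/-- Evaluation at the single-letter alphabet `X = 1` (i.e. `p_k ↦ 1`); for homogeneous `F`
of degree `n` this is the Hall scalar product `⟨F, s_(n)⟩`. -/
def ev1 : Λ →ₐ[K] K := MvPolynomial.aeval fun _ => 1

/-- The modified Macdonald basis `H̃_μ` of `Λ`, axiomatized by the Garsia–Haiman
characterization: `H̃_μ[X(q-1)] ∈ span{s_lam : lam ⊵ μ}`,
`H̃_μ[X(t-1)] ∈ span{s_lam : lam ⊵ μ'}`, and `⟨H̃_μ, s_(n)⟩ = 1`. -/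
structure MacdonaldBasis where
  H : Module.Basis YoungDiagram K Λ
  triangular_q : ∀ μ, twist (fun k => q ^ (k : ℕ) - 1) (H μ) ∈ domSpan μ
  triangular_t : ∀ μ, twist (fun k => t ^ (k : ℕ) - 1) (H μ) ∈ domSpan μ.transpose
  normalized : ∀ μ, ev1 (H μ) = 1

/-- The diagonal operator on `Λ` acting on the Macdonald basis with eigenvalues `ev`. -/
def diag (B : MacdonaldBasis) (ev : YoungDiagram → K) (F : Λ) : Λ :=
  (B.H.repr F).sum fun μ c => (ev μ * c) • B.H μ

/-- The Delta eigenoperator `Δ_f : H̃_μ ↦ f[B_μ] H̃_μ`. -/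
def Delta (B : MacdonaldBasis) (f : Λ) : Λ → Λ :=
  diag B fun μ => MvPolynomial.aeval (Bexp μ) f

/-- `∇ : H̃_μ ↦ (-1)^{|μ|} q^{n(μ')} t^{n(μ)} H̃_μ`. -/
def nabla (B : MacdonaldBasis) : Λ → Λ :=
  diag B fun μ => (-1) ^ μ.card * q ^ nstat' μ * t ^ nstat μ

/-- The inverse of `∇`. -/
def nablaInv (B : MacdonaldBasis) : Λ → Λ :=
  diag B fun μ => ((-1) ^ μ.card * q ^ nstat' μ * t ^ nstat μ)⁻¹

/-- `Π_μ = ∏_{(i,j) ∈ μ/(1)} (1 - q^i t^j)` (product over all cells but the corner). -/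
def PiEv (μ : YoungDiagram) : K :=
  ∏ c ∈ μ.cells.erase (0, 0), (1 - q ^ c.2 * t ^ c.1)

/-- The operator `Π : H̃_μ ↦ Π_μ H̃_μ`. -/
def PiOp (B : MacdonaldBasis) : Λ → Λ := diag B PiEv

/-- The inverse of `Π`. -/
def PiInv (B : MacdonaldBasis) : Λ → Λ := diag B fun μ => (PiEv μ)⁻¹

/-- The Theta operator `Θ_k = Π ∘ (multiplication by e_k[X/M]) ∘ Π⁻¹`. -/
def Theta (B : MacdonaldBasis) (k : ℕ) (F : Λ) : Λ :=
  PiOp B (star (e k) * PiInv B F)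

/-- `Δ_v = ∑_{n ≥ 0} (-v)^n Δ_{e_n}`, the diagonal operator with eigenvalues
`∏_{(i,j) ∈ μ} (1 - v q^i t^j)`. -/
def DeltaV (B : MacdonaldBasis) (v : K) : Λ → Λ :=
  diag B fun μ => ∏ c ∈ μ.cells, (1 - v * q ^ c.2 * t ^ c.1)

/-- The inverse of `Δ_v`. -/
def DeltaVInv (B : MacdonaldBasis) (v : K) : Λ → Λ :=
  diag B fun μ => (∏ c ∈ μ.cells, (1 - v * q ^ c.2 * t ^ c.1))⁻¹

/-- `v ∈ ℚ(q,t)` is a monomial `q^a t^b`. -/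
def IsMonomial (v : K) : Prop := ∃ a b : ℤ, v = q ^ a * t ^ b

/-- `∏_{(i,j) ∈ μ} (1 - q^i t^j u)` as a polynomial in `u`. -/
def cellPoly (μ : YoungDiagram) : Polynomial K :=
  ∏ c ∈ μ.cells, (1 - Polynomial.C (q ^ c.2 * t ^ c.1) * Polynomial.X)

/-!
If `c_k = p_k[W]`, the series `E[zWX] = exp (∑ c_k z^k / k)` is the unique power series with
constant term `1` whose logarithmic derivative is `∑ c_{k+1} z^k`. Uniqueness makes
`E[z(W + W')X] = E[zWX] · E[zW'X]` and makes `E` commute with ring maps. The translation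
`X ↦ X + M/z` sends `p_k[X/M]` to `p_k[X/M] + z^{-k}`, hence sends `E[wX/M]` to
`E[wX/M] · ∑ (w/z)^j`, i.e. `h_n[X/M] ↦ ∑_{i+j=n} h_i[X/M] z^{-j}`. Reading off `z^1` gives
`D_1 (h_n[X/M] F) = ∑_{i+j=n} h_i[X/M] D_{1+j} F`, so `∑ z^n D_1 (h_n[X/M] F)` is
`E[zX/M] · ∑ z^j D_{1+j} F`; now multiply by `E[-zX/M] = E[zX/M]⁻¹` and by `z`.
-/

open PowerSeries
open Finset.HasAntidiagonal (antidiagonal mem_antidiagonal)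

section ExpSeries

variable {A B : Type*} [CommRing A] [CommRing B]

def logDerivSeries (c : ℕ+ → A) : A⟦X⟧ := mk fun n => c n.succPNat

/-- `f = exp (∑ c_k z^k / k)`. -/
def IsExpSeries (c : ℕ+ → A) (f : A⟦X⟧) : Prop :=
  constantCoeff f = 1 ∧ d⁄dX A f = logDerivSeries c * f

theorem coeff_logDerivSeries_mul (c : ℕ+ → A) (f : A⟦X⟧) (n : ℕ) :
    coeff n (logDerivSeries c * f)
      = ∑ ij ∈ antidiagonal n, c ij.1.succPNat * coeff ij.2 f := by
  simp only [coeff_mul, logDerivSeries, coeff_mk]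

theorem logDerivSeries_add (c d : ℕ+ → A) :
    logDerivSeries (c + d) = logDerivSeries c + logDerivSeries d := by
  ext n
  simp [logDerivSeries]

theorem IsExpSeries.unique [IsAddTorsionFree A] {c : ℕ+ → A} {f g : A⟦X⟧}
    (hf : IsExpSeries c f) (hg : IsExpSeries c g) : f = g := by
  ext n
  induction n using Nat.strong_induction_on with
  | _ n ih =>
  cases n with
  | zero => simp only [coeff_zero_eq_constantCoeff_apply, hf.1, hg.1]
  | succ n =>
    have hrec : ∀ h : A⟦X⟧, IsExpSeries c h →
        (n + 1) • coeff (n + 1) h = coeff n (logDerivSeries c * h) := fun h hh => by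
      rw [← hh.2, coeff_derivative, nsmul_eq_mul, mul_comm]
      push_cast
      rfl
    refine nsmul_right_injective n.succ_ne_zero ?_
    simp only [hrec f hf, hrec g hg, coeff_logDerivSeries_mul]
    exact Finset.sum_congr rfl fun ij hij => by rw [ih ij.2 (Finset.Nat.antidiagonal.snd_lt hij)]

theorem IsExpSeries.mul {c d : ℕ+ → A} {f g : A⟦X⟧} (hf : IsExpSeries c f)
    (hg : IsExpSeries d g) : IsExpSeries (c + d) (f * g) := by
  refine ⟨by rw [map_mul, hf.1, hg.1, one_mul], ?_⟩
  rw [Derivation.leibniz, hf.2, hg.2, logDerivSeries_add, smul_eq_mul, smul_eq_mul]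
  ring

theorem IsExpSeries.map {c : ℕ+ → A} {f : A⟦X⟧} (hf : IsExpSeries c f) (φ : A →+* B) :
    IsExpSeries (fun k => φ (c k)) (map φ f) := by
  refine ⟨?_, ?_⟩
  · rw [← coeff_zero_eq_constantCoeff_apply, coeff_map, coeff_zero_eq_constantCoeff_apply, hf.1,
      map_one]
  · ext n
    simpa [coeff_derivative, coeff_logDerivSeries_mul] using
      congrArg (fun f => φ (coeff n f)) hf.2

theorem isExpSeries_zero : IsExpSeries (0 : ℕ+ → A) 1 :=
  ⟨map_one _, by rw [Derivation.map_one_eq_zero, mul_one]; ext; simp [logDerivSeries]⟩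

theorem isExpSeries_pow (x : A) :
    IsExpSeries (fun k => x ^ (k : ℕ)) (mk fun n => x ^ n) := by
  refine ⟨by simp [← coeff_zero_eq_constantCoeff_apply], ?_⟩
  ext n
  rw [coeff_derivative, coeff_logDerivSeries_mul, Finset.sum_congr rfl fun ij hij => ?_,
    Finset.sum_const, Finset.Nat.card_antidiagonal, coeff_mk, nsmul_eq_mul, mul_comm]
  · push_cast
    rfl
  · rw [coeff_mk, Nat.succPNat_coe, ← pow_add, Nat.succ_add, mem_antidiagonal.mp hij]

end ExpSeries

theorem isExpSeries_genF (c : ℕ+ → Λ) : IsExpSeries c (mk (genF c)) := by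
  refine ⟨by rw [← coeff_zero_eq_constantCoeff_apply, coeff_mk, genF], ?_⟩
  ext n
  have hn : ((n : K) + 1) ≠ 0 := by exact_mod_cast n.succ_ne_zero
  rw [coeff_derivative, coeff_logDerivSeries_mul, coeff_mk, genF,
    Finset.Nat.sum_antidiagonal_eq_sum_range_succ_mk, mul_comm, ← Nat.cast_succ, ← nsmul_eq_mul,
    ← Nat.cast_smul_eq_nsmul K, smul_smul, Nat.cast_succ, mul_inv_cancel₀ hn, one_smul]
  simp only [coeff_mk]
  rfl

theorem isExpSeries_Eser (ζ : ℕ+ → K) :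
    IsExpSeries (fun k => MvPolynomial.C (ζ k) * p k) (mk (Eser ζ)) :=
  isExpSeries_genF _

theorem one_sub_X_pow_ne_zero (i : Fin 2) (k : ℕ+) :
    (1 : K) - algebraMap (MvPolynomial (Fin 2) ℚ) K (MvPolynomial.X i) ^ (k : ℕ) ≠ 0 := by
  intro h
  rw [← map_pow, ← map_one (algebraMap (MvPolynomial (Fin 2) ℚ) K), ← map_sub,
    map_eq_zero_iff _ (IsFractionRing.injective (MvPolynomial (Fin 2) ℚ) K)] at h
  have h2 := congrArg (MvPolynomial.eval fun _ => (2 : ℚ)) h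
  simp only [map_sub, map_one, map_pow, MvPolynomial.eval_X, map_zero] at h2
  linarith [one_lt_pow₀ (by norm_num : (1 : ℚ) < 2) k.ne_zero]

theorem Mk_ne_zero (k : ℕ+) : Mk k ≠ 0 :=
  mul_ne_zero (one_sub_X_pow_ne_zero 0 k) (one_sub_X_pow_ne_zero 1 k)

instance : CharZero (LaurentSeries Λ) := charZero_of_injective_ringHom HahnSeries.C_injective

theorem smul_laurentSeries_eq_C_mul (a : K) (x : LaurentSeries Λ) :
    a • x = HahnSeries.C (MvPolynomial.C a) * x := by
  rw [HahnSeries.C_mul_eq_smul]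
  exact (algebraMap_smul Λ a x).symm

theorem algebraMap_laurentSeries_apply (a : K) :
    algebraMap K (LaurentSeries Λ) a = HahnSeries.C (MvPolynomial.C a) := by
  rw [HahnSeries.algebraMap_apply', PowerSeries.algebraMap_apply, HahnSeries.ofPowerSeries_C,
    MvPolynomial.algebraMap_eq]

theorem single_neg_one_pow (n : ℕ) :
    (HahnSeries.single (-1 : ℤ) (1 : Λ)) ^ n = HahnSeries.single (-(n : ℤ)) 1 := by
  rw [HahnSeries.single_pow, one_pow, smul_neg, nsmul_one]

theorem TMz_invM_mul_p (k : ℕ+) :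
    TMz (MvPolynomial.C (invM k) * p k)
      = HahnSeries.C (MvPolynomial.C (invM k) * p k) + HahnSeries.single (-1) 1 ^ (k : ℕ) := by
  have hMk : invM k * Mk k = 1 := inv_mul_cancel₀ (Mk_ne_zero k)
  rw [TMz, map_mul, MvPolynomial.aeval_C, p, MvPolynomial.aeval_X, smul_laurentSeries_eq_C_mul,
    algebraMap_laurentSeries_apply, single_neg_one_pow, mul_add, ← mul_assoc, ← map_mul,
    ← map_mul, ← map_mul, hMk, map_one, map_one, one_mul]
  rfl

theorem map_TMz_mk_Eser_invM :
    map (TMz : Λ →+* LaurentSeries Λ) (mk (Eser invM))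
      = map HahnSeries.C (mk (Eser invM)) * mk fun n => HahnSeries.single (-1) 1 ^ n := by
  refine ((isExpSeries_Eser invM).map (B := LaurentSeries Λ) TMz).unique ?_
  convert ((isExpSeries_Eser invM).map HahnSeries.C).mul
    (isExpSeries_pow (HahnSeries.single (-1 : ℤ) (1 : Λ))) using 1
  funext k
  exact TMz_invM_mul_p k

theorem TMz_Eser_invM (n : ℕ) :
    TMz (Eser invM n)
      = ∑ ij ∈ antidiagonal n, HahnSeries.single (-(ij.2 : ℤ)) (Eser invM ij.1) := by
  have h := congrArg (coeff n) map_TMz_mk_Eser_invM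
  simp only [coeff_map, coeff_mk, coeff_mul, RingHom.coe_coe] at h
  rw [h]
  refine Finset.sum_congr rfl fun ij _ => ?_
  rw [single_neg_one_pow, HahnSeries.C_apply, HahnSeries.single_mul_single, zero_add, mul_one]

theorem D_one_Eser_invM_mul (F : Λ) (n : ℕ) :
    D 1 (Eser invM n * F) = ∑ ij ∈ antidiagonal n, Eser invM ij.1 * D (1 + ij.2) F := by
  rw [D, map_mul, TMz_Eser_invM, mul_assoc, Finset.sum_mul, HahnSeries.coeff_sum]
  refine Finset.sum_congr rfl fun ij _ => ?_
  have h := HahnSeries.coeff_single_mul_add (a := 1 + (ij.2 : ℤ)) (b := -(ij.2 : ℤ))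
    (r := Eser invM ij.1) (x := TMz F * EnegL)
  rwa [add_neg_cancel_right] at h

theorem mk_D_one_Eser_invM_mul (F : Λ) :
    (mk fun n => D 1 (Eser invM n * F)) = mk (Eser invM) * mk fun j => D (1 + j) F := by
  ext n
  simp only [coeff_mk, coeff_mul, D_one_Eser_invM_mul]

theorem mk_Eser_neg_invM_mul_mk_Eser_invM :
    (mk fun n => Eser (fun j => -invM j) n) * mk (Eser invM) = 1 := by
  refine ((isExpSeries_Eser _).mul (isExpSeries_Eser _)).unique ?_
  convert isExpSeries_zero using 1
  funext k
  simp only [Pi.add_apply, Pi.zero_apply, map_neg]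
  ring

/-- `D_+(z) = ∑_{k ≥ 1} z^k D_k = z · P_{-z/M} ∘ D_1 ∘ P_{z/M}`. -/
theorem Dplus_eq (F : Λ) :
    (PowerSeries.mk fun k => if 1 ≤ k then D (k : ℤ) F else 0)
      = PowerSeries.X
          * ((PowerSeries.mk fun n => Eser (fun j => -invM j) n)
              * PowerSeries.mk fun n => D 1 (Eser invM n * F)) := by
  rw [mk_D_one_Eser_invM_mul, ← mul_assoc (mk fun n => Eser (fun j => -invM j) n),
    mk_Eser_neg_invM_mul_mk_Eser_invM, one_mul]
  refine PowerSeries.ext fun k => ?_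
  cases k with
  | zero => simp
  | succ k =>
    rw [coeff_mk, coeff_succ_X_mul, coeff_mk, if_pos (Nat.le_add_left 1 k), add_comm]
    push_cast
    rfl

end ThetaOperators
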